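/- Define for each System T type σ the generalised Kleisli extension K_σ : (ℕ → D_σ) → Dialogue ℕ ℕ ℕ → D_σ, where D_ι = Dialogue ℕ ℕ ℕ, D_{σ₁⇒σ₂} = D_{σ₁} → D_{σ₂}, K_ι f = kleisli f, and K_{σ₁⇒σ₂} f d s = K_{σ₂} (fun x => f x s) d. Let R_α be the logical relation given at ι by R_α n d iff n = dialogue d α, and at arrow types pointwise. If R_α relates g : ℕ → ⟦σ⟧ to f : ℕ → D_σ argumentwise (i.e., for all i, R_α (g i) (f i) at σ), and R_α relates n : ℕ to d : Dialogue ℕ ℕ ℕ at ι, then R_α relates g n to K_σ f d at σ. -/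

import Mathlib

inductive Dialogue (I O X : Type) : Type
  | eta : X → Dialogue I O X
  | beta : (O → Dialogue I O X) → I → Dialogue I O X

def dialogue {I O X : Type} : Dialogue I O X → (I → O) → X
  | .eta x, _ => x
  | .beta φ i, α => dialogue (φ (α i)) α

def kleisli {I O X Y : Type} (f : X → Dialogue I O Y) : Dialogue I O X → Dialogue I O Y
  | .eta x => f x
  | .beta φ i => .beta (fun o => kleisli f (φ o)) i

inductive Ty : Type
  | iota
  | arr : Ty → Ty → Ty

inductive Var : List Ty → Ty → Type
  | vz {Γ σ} : Var (σ :: Γ) σ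
  | vs {Γ σ τ} : Var Γ σ → Var (τ :: Γ) σ

inductive Tm : List Ty → Ty → Type
  | var {Γ σ} : Var Γ σ → Tm Γ σ
  | zero {Γ} : Tm Γ .iota
  | succ {Γ} : Tm Γ .iota → Tm Γ .iota
  | recn {Γ σ} : Tm Γ (.arr .iota (.arr σ σ)) → Tm Γ σ → Tm Γ .iota → Tm Γ σ
  | lam {Γ σ τ} : Tm (σ :: Γ) τ → Tm Γ (.arr σ τ)
  | app {Γ σ τ} : Tm Γ (.arr σ τ) → Tm Γ σ → Tm Γ τ

def natrec {X : Type} (f : ℕ → X → X) (x : X) : ℕ → X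
  | 0 => x
  | n + 1 => f n (natrec f x n)

def Ty.set : Ty → Type
  | .iota => ℕ
  | .arr σ τ => σ.set → τ.set

def Env : List Ty → Type
  | [] => Unit
  | σ :: Γ => σ.set × Env Γ

def Var.eval : ∀ {Γ σ}, Var Γ σ → Env Γ → σ.set
  | _, _, .vz, γ => γ.1
  | _, _, .vs v, γ => v.eval γ.2

def Tm.eval : ∀ {Γ σ}, Tm Γ σ → Env Γ → σ.set
  | _, _, .var v, γ => v.eval γ
  | _, _, .zero, _ => (0 : ℕ)
  | _, _, .succ t, γ => Nat.succ (Tm.eval t γ)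
  | _, _, .recn f x n, γ => natrec (Tm.eval f γ) (Tm.eval x γ) (Tm.eval n γ)
  | _, _, .lam t, γ => fun x => Tm.eval t (x, γ)
  | _, _, .app t u, γ => Tm.eval t γ (Tm.eval u γ)

def Ty.dial : Ty → Type
  | .iota => Dialogue ℕ ℕ ℕ
  | .arr σ τ => σ.dial → τ.dial

def gk : ∀ σ : Ty, (ℕ → σ.dial) → Dialogue ℕ ℕ ℕ → σ.dial
  | .iota, f, d => kleisli f d
  | .arr _ σ₂, f, d => fun s => gk σ₂ (fun x => f x s) d

def DEnv : List Ty → Type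
  | [] => Unit
  | σ :: Γ => σ.dial × DEnv Γ

def Var.dial : ∀ {Γ σ}, Var Γ σ → DEnv Γ → σ.dial
  | _, _, .vz, γ => γ.1
  | _, _, .vs v, γ => v.dial γ.2

def Tm.dial : ∀ {Γ σ}, Tm Γ σ → DEnv Γ → σ.dial
  | _, _, .var v, γ => v.dial γ
  | _, _, .zero, _ => .eta 0
  | _, _, .succ t, γ => kleisli (fun n => .eta (n + 1)) (Tm.dial t γ)
  | _, _, .recn f x n, γ =>
      gk _ (natrec (fun k => Tm.dial f γ (.eta k)) (Tm.dial x γ)) (Tm.dial n γ)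
  | _, _, .lam t, γ => fun x => Tm.dial t (x, γ)
  | _, _, .app t u, γ => Tm.dial t γ (Tm.dial u γ)

def generic : Dialogue ℕ ℕ ℕ → Dialogue ℕ ℕ ℕ :=
  kleisli (fun n => .beta .eta n)

def dtree (t : Tm [] (.arr (.arr .iota .iota) .iota)) : Dialogue ℕ ℕ ℕ :=
  Tm.dial t () generic

def LR (α : ℕ → ℕ) : ∀ σ : Ty, σ.set → σ.dial → Prop
  | .iota, n, d => n = dialogue d α
  | .arr σ τ, f, g => ∀ x y, LR α σ x y → LR α τ (f x) (g y)

theorem dialogue_kleisli (f : ℕ → Dialogue ℕ ℕ ℕ) (d : Dialogue ℕ ℕ ℕ) (α : ℕ → ℕ) :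
    dialogue (kleisli f d) α = dialogue (f (dialogue d α)) α := by
  induction d with
  | eta x => rfl
  | beta φ i ih => simp [kleisli, dialogue, ih]

theorem gk_kleisli_lemma (α : ℕ → ℕ) (σ : Ty)
    (g : ℕ → σ.set) (f : ℕ → σ.dial)
    (hgf : ∀ i : ℕ, LR α σ (g i) (f i))
    (n : ℕ) (d : Dialogue ℕ ℕ ℕ) (hnd : LR α .iota n d) :
    LR α σ (g n) (gk σ f d) := by
  induction σ with
  | iota =>
    simp only [LR] at *
    rw [gk, dialogue_kleisli (f := f), ← hnd]
    exact hgf n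
  | arr σ₁ σ₂ ih₁ ih₂ =>
    intro x y hxy
    exact ih₂ (fun i => g i x) (fun i => f i y) (fun i => hgf i x y hxy)
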